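/- Let R be a ring with proper involution, m a positive integer, and let x be an m-weak group inverse of a ∈ R. Then x is an m-weak group inverse of a^2 x; that is, applying the m-weak group inverse operation three times to a returns a^{W_m}: ((a^{W_m})^{W_m})^{W_m} = a^{W_m}. -/

import Mathlib

/-- `z` is an `m`-weak group inverse of `a`. -/
def IsMWGI {R : Type*} [Ring R] [StarRing R] (m : ℕ) (a z : R) : Prop :=
  a * z ^ 2 = z ∧ ∃ k : ℕ, z * a ^ (k + 1) = a ^ k ∧
    star (a ^ k) * a ^ (m + 1) * z = star (a ^ k) * a ^ m

/-- `w` is a weak group inverse of `b`. -/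
def IsWGI {R : Type*} [Ring R] [StarRing R] (b w : R) : Prop :=
  b * w ^ 2 = w ∧ star (star b * b ^ 2 * w) = star b * b ^ 2 * w ∧
    ∃ k : ℕ, b ^ k = w * b ^ (k + 1)

/-- `x` is a group inverse of `u`. -/
def IsGroupInv {R : Type*} [Ring R] (u x : R) : Prop :=
  u * x ^ 2 = x ∧ u * x = x * u ∧ u = u ^ 2 * x

/-- `d` is a Drazin inverse of `a`. -/
def IsDrazin {R : Type*} [Ring R] (a d : R) : Prop :=
  a * d ^ 2 = d ∧ a * d = d * a ∧ ∃ k : ℕ, a ^ k = d * a ^ (k + 1)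

/-- `y` is a core-EP inverse of `a`. -/
def IsCoreEP {R : Type*} [Ring R] [StarRing R] (a y : R) : Prop :=
  a * y ^ 2 = y ∧ star (a * y) = a * y ∧ ∃ k : ℕ, a ^ k = y * a ^ (k + 1)

/-!
With `b = a ^ 2 * x`, the identity `x * a ^ 2 * x = a * x` gives `b ^ (n + 1) = a ^ (n + 2) * x`,
so the defining identities of `x` as an inverse of `b` reduce to those of `x` as an inverse of `a`
(with index `k + 1`). Moreover `b ^ (m + 1) * x = b ^ m` already holds for `m ≥ 1`, which makes the
condition involving `star` automatic.
-/

section Monoid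

variable {M : Type*} [Monoid M] {a x : M}

theorem pow_mul_pow_succ_eq_of_mul_sq_eq (h : a * x ^ 2 = x) (n : ℕ) :
    a ^ n * x ^ (n + 1) = x := by
  induction n with
  | zero => simp
  | succ n ih =>
    calc a ^ (n + 1) * x ^ (n + 1 + 1) = a ^ n * (a * x ^ 2) * x ^ n := by
          rw [pow_succ a, mul_assoc _ a, mul_assoc, mul_assoc a, ← pow_add, add_comm 2 n]
      _ = x := by rw [h, mul_assoc, ← pow_succ', ih]

theorem mul_sq_mul_eq_of_mul_sq_eq (h : a * x ^ 2 = x) {k : ℕ} (hk : x * a ^ (k + 1) = a ^ k) :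
    x * a ^ 2 * x = a * x :=
  calc x * a ^ 2 * x = x * (a ^ 2 * a ^ k) * x ^ (k + 1) := by
        rw [mul_assoc x, mul_assoc, mul_assoc, pow_mul_pow_succ_eq_of_mul_sq_eq h]
    _ = x * a ^ (k + 1) * a * x ^ (k + 1) := by
        rw [mul_assoc x (a ^ (k + 1)), ← pow_succ, ← pow_add, add_comm 2 k]
    _ = a * x := by
        rw [hk, ← pow_succ, pow_succ', mul_assoc, pow_mul_pow_succ_eq_of_mul_sq_eq h]

theorem sq_mul_pow_succ_of_mul_sq_mul_eq (h : x * a ^ 2 * x = a * x) (n : ℕ) :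
    (a ^ 2 * x) ^ (n + 1) = a ^ (n + 2) * x := by
  induction n with
  | zero => simp
  | succ n ih =>
    calc (a ^ 2 * x) ^ (n + 1 + 1) = a ^ (n + 2) * (x * a ^ 2 * x) := by
          rw [pow_succ, ih]; simp only [mul_assoc]
      _ = a ^ (n + 1 + 2) * x := by rw [h, ← mul_assoc, ← pow_succ]

end Monoid

theorem isMWGI_of_pow_succ_mul_eq {R : Type*} [Ring R] [StarRing R] {m k : ℕ} {a z : R}
    (hz : a * z ^ 2 = z) (hk : z * a ^ (k + 1) = a ^ k) (hm : a ^ (m + 1) * z = a ^ m) :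
    IsMWGI m a z :=
  ⟨hz, k, hk, by rw [mul_assoc, hm]⟩

theorem mwgi_triple_general {R : Type*} [Ring R] [StarRing R]
    (m : ℕ) (hm : 0 < m) (a x : R) (hx : IsMWGI m a x) :
    IsMWGI m (a ^ 2 * x) x := by
  obtain ⟨hax, k, hk, -⟩ := hx
  have hpow := sq_mul_pow_succ_of_mul_sq_mul_eq (mul_sq_mul_eq_of_mul_sq_eq hax hk)
  obtain ⟨m, rfl⟩ := Nat.exists_eq_add_one.mpr hm
  refine isMWGI_of_pow_succ_mul_eq (k := k + 1) ?_ ?_ ?_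
  · calc a ^ 2 * x * x ^ 2 = a * (a * x ^ 2) * x := by simp only [sq, mul_assoc]
      _ = x := by rw [hax, mul_assoc, ← sq, hax]
  · calc x * (a ^ 2 * x) ^ (k + 1 + 1) = x * a ^ (k + 1) * (a ^ 2 * x) := by
          rw [hpow, pow_add a (k + 1) 2]; simp only [mul_assoc]
      _ = (a ^ 2 * x) ^ (k + 1) := by rw [hk, hpow, ← mul_assoc, ← pow_add]
  · calc (a ^ 2 * x) ^ (m + 1 + 1) * x = a ^ (m + 2) * (a * x ^ 2) := by
          rw [hpow, pow_succ a, sq]; simp only [mul_assoc]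
      _ = (a ^ 2 * x) ^ (m + 1) := by rw [hax, hpow]

theorem mwgi_triple {R : Type*} [Ring R] [StarRing R]
    (hproper : ∀ x : R, star x * x = 0 → x = 0)
    (m : ℕ) (hm : 0 < m) (a x : R) (hx : IsMWGI m a x) :
    IsMWGI m (a ^ 2 * x) x :=
  mwgi_triple_general m hm a x hx
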